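/- Under the assumptions above, the point Λ* ∈ Im(√𝐖) with ∇F(X*) = −√𝐖 Λ* is a maximizer of the dual problem Λ ↦ −F*(−√𝐖 Λ), and it is the unique maximizer lying in Im(√𝐖). -/

import Mathlib

open Matrix Kronecker Set

section

open scoped ComplexOrder

/-- The square root of a positive semidefinite matrix, as defined in Mathlib (December 2024). -/
noncomputable def Matrix.PosSemidef.sqrt {n 𝕜 : Type*} [Fintype n] [DecidableEq n] [RCLike 𝕜]
    {A : Matrix n n 𝕜} (hA : A.PosSemidef) : Matrix n n 𝕜 :=
  hA.1.eigenvectorUnitary.1 * diagonal ((↑) ∘ (√·) ∘ hA.1.eigenvalues) *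
    (star hA.1.eigenvectorUnitary : Matrix n n 𝕜)

end

/-!
`√𝐖` is symmetric and kills `X* = 1 ⊗ x*`, because `𝐖 X* = 0` and `ker √𝐖 = ker 𝐖`; hence
`⟪√𝐖 Λ, X*⟫ = 0` for every `Λ`, and the Fenchel–Young inequality `F*(y) ≥ ⟪y, X*⟫ - F(X*)`
gives weak duality `D(Λ) ≤ F(X*)`. Fenchel–Young is an equality at `y = ∇F(X*) = -√𝐖 Λ*`,
so `D(Λ*) = F(X*)`. If `Λ` is another maximizer, equality in Fenchel–Young at `y = -√𝐖 Λ`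
says that `X*` maximizes `⟪y, ·⟫ - F`, so `y = ∇F(X*)`; as `√𝐖` is injective on its range,
`Λ = Λ*`. Strong convexity of `F` is what keeps all the conjugate suprema finite.
-/

open scoped RealInnerProductSpace

section ConvexFunction
variable {E : Type*} [NormedAddCommGroup E] [InnerProductSpace ℝ E]

theorem ConvexOn.fun_sum {ι : Type*} {s : Set E} {t : Finset ι} {f : ι → E → ℝ}
    (hs : Convex ℝ s) (hf : ∀ i ∈ t, ConvexOn ℝ s (f i)) :
    ConvexOn ℝ s fun x => ∑ i ∈ t, f i x := by
  classical
  induction t using Finset.induction_on with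
  | empty => simpa using convexOn_const 0 hs
  | insert a t ha ih =>
    simp only [Finset.sum_insert ha]
    exact (hf a (Finset.mem_insert_self a t)).add
      (ih fun i hi => hf i (Finset.mem_insert_of_mem hi))

variable {f : E → ℝ} {f' : E →L[ℝ] ℝ} {x₀ : E} {m : ℝ}

theorem StrongConvexOn.const_mul {s : Set E} {c : ℝ} (hc : 0 ≤ c)
    (hf : StrongConvexOn s m f) : StrongConvexOn s (c * m) fun x => c * f x := by
  rw [strongConvexOn_iff_convex] at hf ⊢
  refine (hf.smul hc).congr fun x _ => ?_
  simp only [smul_eq_mul]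
  ring

theorem ConvexOn.add_fderiv_sub_le (hf : ConvexOn ℝ univ f) (hf' : HasFDerivAt f f' x₀)
    (x : E) : f x₀ + f' (x - x₀) ≤ f x := by
  have hline : ConvexOn ℝ univ (f ∘ AffineMap.lineMap (k := ℝ) x₀ x) := hf.comp_affineMap _
  have hderiv : HasDerivAt (f ∘ AffineMap.lineMap (k := ℝ) x₀ x) (f' (x - x₀)) 0 := by
    have hf'' : HasFDerivAt f f' (AffineMap.lineMap x₀ x (0 : ℝ)) := by simpa using hf'
    exact hf''.comp_hasDerivAt 0 AffineMap.hasDerivAt_lineMap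
  have hslope := hline.le_slope_of_hasDerivAt (mem_univ 0) (mem_univ 1) zero_lt_one hderiv
  simp only [slope_def_field, Function.comp_apply, AffineMap.lineMap_apply_zero,
    AffineMap.lineMap_apply_one, sub_zero, div_one] at hslope
  linarith

theorem StrongConvexOn.add_fderiv_sub_add_le (hf : StrongConvexOn univ m f)
    (hf' : HasFDerivAt f f' x₀) (x : E) :
    f x₀ + f' (x - x₀) + m / 2 * ‖x - x₀‖ ^ 2 ≤ f x := by
  have hconv := (strongConvexOn_iff_convex.mp hf).add_fderiv_sub_le
    (hf'.sub ((hasStrictFDerivAt_norm_sq x₀).hasFDerivAt.const_mul (m / 2))) x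
  have hsq : ‖x - x₀‖ ^ 2 = ‖x‖ ^ 2 - 2 * ⟪x₀, x - x₀⟫ - ‖x₀‖ ^ 2 := by
    rw [inner_sub_right, real_inner_self_eq_norm_sq, norm_sub_sq_real, real_inner_comm]
    ring
  simp only [_root_.sub_apply, _root_.smul_apply, nsmul_eq_mul, innerSL_apply_apply,
    smul_eq_mul] at hconv
  rw [hsq]
  linarith

end ConvexFunction

section FenchelConjugate
variable {E : Type*} [NormedAddCommGroup E] [InnerProductSpace ℝ E]

/-- Real `⨆` is `0` on a family that is not bounded above, so this is the Fenchel conjugate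
only at the `y` for which `⟪y, ·⟫ - F` is bounded above. -/
noncomputable def fenchelConjugate (F : E → ℝ) (y : E) : ℝ := ⨆ x, ⟪y, x⟫ - F x

variable {F : E → ℝ} {x₀ y G : E}

theorem inner_le_add_fenchelConjugate (hbdd : BddAbove (range fun x => ⟪y, x⟫ - F x))
    (x : E) : ⟪y, x⟫ ≤ F x + fenchelConjugate F y := by
  have := le_ciSup hbdd x
  unfold fenchelConjugate
  linarith

variable [CompleteSpace E]

theorem StrongConvexOn.bddAbove_range_inner_sub {m : ℝ} (hF : StrongConvexOn univ m F)
    (hm : 0 < m) (hG : HasGradientAt F G x₀) (y : E) :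
    BddAbove (range fun x => ⟪y, x⟫ - F x) := by
  refine ⟨⟪y, x₀⟫ - F x₀ + ‖y - G‖ ^ 2 / (2 * m), ?_⟩
  rintro _ ⟨x, rfl⟩
  have hquad := hF.add_fderiv_sub_add_le hG x
  rw [InnerProductSpace.toDual_apply_apply] at hquad
  have hcs : ⟪y - G, x - x₀⟫ ≤ ‖y - G‖ * ‖x - x₀‖ := real_inner_le_norm _ _
  -- AM-GM: `a b ≤ m b² / 2 + a² / (2 m)`
  have hamgm : ‖y - G‖ * ‖x - x₀‖ ≤ m / 2 * ‖x - x₀‖ ^ 2 + ‖y - G‖ ^ 2 / (2 * m) := by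
    have hsq : 0 ≤ (m * ‖x - x₀‖ - ‖y - G‖) ^ 2 / (2 * m) := by positivity
    have hm' : m ≠ 0 := hm.ne'
    field_simp at hsq ⊢
    nlinarith
  simp only [inner_sub_left, inner_sub_right] at hcs hquad
  linarith

theorem ConvexOn.fenchelConjugate_eq_of_hasGradientAt (hF : ConvexOn ℝ univ F)
    (hG : HasGradientAt F G x₀) : fenchelConjugate F G = ⟪G, x₀⟫ - F x₀ := by
  have hle : ∀ x, ⟪G, x⟫ - F x ≤ ⟪G, x₀⟫ - F x₀ := fun x => by
    have := hF.add_fderiv_sub_le hG x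
    rw [InnerProductSpace.toDual_apply_apply, inner_sub_right] at this
    linarith
  exact le_antisymm (ciSup_le hle) (le_ciSup ⟨_, forall_mem_range.2 hle⟩ x₀)

theorem HasGradientAt.eq_of_fenchelConjugate_le (hG : HasGradientAt F G x₀)
    (hbdd : BddAbove (range fun x => ⟪y, x⟫ - F x))
    (hy : fenchelConjugate F y ≤ ⟪y, x₀⟫ - F x₀) : y = G := by
  have hmax : IsMaxOn (fun x => ⟪y, x⟫ - F x) univ x₀ := fun x _ =>
    (le_ciSup hbdd x).trans hy
  have hzero := (hmax.isLocalMax Filter.univ_mem).hasFDerivAt_eq_zero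
    ((innerSL ℝ y).hasFDerivAt.sub hG)
  have := congrArg (fun φ : E →L[ℝ] ℝ => φ (y - G)) hzero
  simp only [_root_.sub_apply, innerSL_apply_apply, InnerProductSpace.toDual_apply_apply,
    _root_.zero_apply, ← inner_sub_left] at this
  exact sub_eq_zero.mp (inner_self_eq_zero.mp this)

end FenchelConjugate

section Duality
variable {E : Type*} [NormedAddCommGroup E] [InnerProductSpace ℝ E]

theorem LinearMap.IsSymmetric.injOn_range {T : E →ₗ[ℝ] E} (hT : T.IsSymmetric) :
    InjOn T (range T) :=
  injOn_of_disjoint_ker (p := LinearMap.range T) subset_rfl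
    (hT.orthogonal_range ▸ Submodule.orthogonal_disjoint _)

variable [CompleteSpace E] {F : E → ℝ} {m : ℝ} {T : E →ₗ[ℝ] E} {X Λ₀ : E}

/-- `Λ ↦ -F^*(-T Λ)` is the dual function of the problem `min F` subject to `T X = 0`. -/
theorem StrongConvexOn.isMaxOn_dual_and_unique (hF : StrongConvexOn univ m F) (hm : 0 < m)
    (hT : T.IsSymmetric) (hTX : T X = 0) (hΛ₀ : Λ₀ ∈ range T)
    (hgrad : HasGradientAt F (-T Λ₀) X) :
    IsMaxOn (fun Λ => -fenchelConjugate F (-T Λ)) univ Λ₀ ∧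
      ∀ Λ ∈ range T, IsMaxOn (fun Λ => -fenchelConjugate F (-T Λ)) univ Λ → Λ = Λ₀ := by
  have horth : ∀ Λ, ⟪-T Λ, X⟫ = 0 := fun Λ => by
    rw [inner_neg_left, hT, hTX, inner_zero_right, neg_zero]
  have hweak : ∀ Λ, -fenchelConjugate F (-T Λ) ≤ F X := fun Λ => by
    have := inner_le_add_fenchelConjugate (hF.bddAbove_range_inner_sub hm hgrad (-T Λ)) X
    linarith [horth Λ]
  have hstrong : -fenchelConjugate F (-T Λ₀) = F X := by
    rw [(hF.convexOn fun r => by positivity).fenchelConjugate_eq_of_hasGradientAt hgrad, horth]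
    ring
  refine ⟨isMaxOn_iff.mpr fun Λ _ => hstrong ▸ hweak Λ,
    fun Λ hΛ hmax => hT.injOn_range hΛ hΛ₀ ?_⟩
  have hconj : fenchelConjugate F (-T Λ) ≤ ⟪-T Λ, X⟫ - F X := by
    linarith [isMaxOn_iff.mp hmax Λ₀ (mem_univ _), horth Λ]
  exact neg_injective
    (hgrad.eq_of_fenchelConjugate_le (hF.bddAbove_range_inner_sub hm hgrad _) hconj)

end Duality

namespace EuclideanSpace
variable {ι κ : Type*} [Fintype ι] [Fintype κ]

def blockLinearMap (i : ι) : EuclideanSpace ℝ (ι × κ) →ₗ[ℝ] EuclideanSpace ℝ κ where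
  toFun X := WithLp.toLp 2 fun k => X (i, k)
  map_add' _ _ := rfl
  map_smul' _ _ := rfl

theorem sum_norm_blockLinearMap_sq (X : EuclideanSpace ℝ (ι × κ)) :
    ∑ i, ‖blockLinearMap i X‖ ^ 2 = ‖X‖ ^ 2 := by
  simp only [EuclideanSpace.norm_sq_eq, Fintype.sum_prod_type]
  rfl

theorem strongConvexOn_sum_comp_blockLinearMap {f : ι → EuclideanSpace ℝ κ → ℝ} {m : ℝ}
    (hf : ∀ i, StrongConvexOn univ m (f i)) :
    StrongConvexOn univ m fun X : EuclideanSpace ℝ (ι × κ) => ∑ i, f i (blockLinearMap i X) := by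
  rw [strongConvexOn_iff_convex]
  convert ConvexOn.fun_sum (t := Finset.univ) convex_univ fun i _ =>
    (strongConvexOn_iff_convex.mp (hf i)).comp_linearMap (blockLinearMap i) using 2 with X
  rw [← sum_norm_blockLinearMap_sq X]
  simp only [Function.comp_apply, Finset.sum_sub_distrib, ← Finset.mul_sum]

end EuclideanSpace

namespace Matrix

theorem kronecker_one_mulVec {l m n R : Type*} [Fintype m] [Fintype n] [DecidableEq n]
    [CommSemiring R] (A : Matrix l m R) (x : n → R) :
    (A ⊗ₖ (1 : Matrix n n R)) *ᵥ (fun p => x p.2) = fun p => (A *ᵥ 1) p.1 * x p.2 := by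
  ext ⟨i, k⟩
  simp [mulVec, dotProduct, Fintype.sum_prod_type, kroneckerMap_apply, one_apply, Finset.sum_mul]

theorem range_toLp_comp_mulVec {m n 𝕜 : Type*} [Fintype n] [DecidableEq n] [RCLike 𝕜]
    (A : Matrix m n 𝕜) : range (WithLp.toLp 2 ∘ A.mulVec) = range A.toEuclideanLin :=
  (WithLp.toLp_surjective 2).range_comp A.toEuclideanLin

namespace PosSemidef
open scoped ComplexOrder
variable {ι 𝕜 : Type*} [Fintype ι] [DecidableEq ι] [RCLike 𝕜] {A : Matrix ι ι 𝕜}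

theorem isHermitian_sqrt (hA : A.PosSemidef) : hA.sqrt.IsHermitian := by
  simp [PosSemidef.sqrt, IsHermitian, conjTranspose_mul, Matrix.mul_assoc,
    star_eq_conjTranspose, Function.comp_def, Pi.star_def, RCLike.star_def]

theorem sqrt_mul_self (hA : A.PosSemidef) : hA.sqrt * hA.sqrt = A := by
  have hU : star (hA.1.eigenvectorUnitary : Matrix ι ι 𝕜) * hA.1.eigenvectorUnitary = 1 :=
    Unitary.coe_star_mul_self _
  conv_rhs => rw [hA.1.spectral_theorem, Unitary.conjStarAlgAut_apply]
  simp only [PosSemidef.sqrt, Matrix.mul_assoc]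
  rw [← Matrix.mul_assoc (star _) _ (diagonal _ * _), hU, Matrix.one_mul,
    ← Matrix.mul_assoc (diagonal _), diagonal_mul_diagonal]
  congr 3
  ext i
  simp [← RCLike.ofReal_mul, Real.mul_self_sqrt (hA.eigenvalues_nonneg i)]

theorem sqrt_mulVec_eq_zero_iff (hA : A.PosSemidef) {x : ι → 𝕜} :
    hA.sqrt *ᵥ x = 0 ↔ A *ᵥ x = 0 := by
  have := SetLike.ext_iff.mp (ker_mulVecLin_conjTranspose_mul_self hA.sqrt) x
  simp only [hA.isHermitian_sqrt.eq, sqrt_mul_self, LinearMap.mem_ker, mulVecLin_apply] at this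
  exact this.symm

end PosSemidef

end Matrix

theorem dual_optimum_unique_in_image_general
    (n d : ℕ) (μ : ℝ) (hμ : 0 < μ)
    (W : Matrix (Fin n) (Fin n) ℝ)
    (hker : LinearMap.ker W.mulVecLin =
      Submodule.span ℝ {(fun _ => (1 : ℝ) : Fin n → ℝ)})
    (hbW : (W ⊗ₖ (1 : Matrix (Fin d) (Fin d) ℝ)).PosSemidef)
    (f : Fin n → EuclideanSpace ℝ (Fin d) → ℝ)
    (hfdiff : ∀ i, Differentiable ℝ (f i))
    (hfsc : ∀ i, StrongConvexOn Set.univ μ (f i))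
    (xstar : EuclideanSpace ℝ (Fin d))
    (F : EuclideanSpace ℝ (Fin n × Fin d) → ℝ)
    (hF : F = fun X => (1 / (n : ℝ)) * ∑ i, f i (WithLp.toLp 2 (fun k => X (i, k))))
    (Xstar : EuclideanSpace ℝ (Fin n × Fin d))
    (hXstar : Xstar = WithLp.toLp 2 (fun p => xstar p.2))
    (Λstar : EuclideanSpace ℝ (Fin n × Fin d))
    (hΛmem : Λstar ∈ (Set.range (WithLp.toLp 2 ∘ hbW.sqrt.mulVec) :
      Set (EuclideanSpace ℝ (Fin n × Fin d))))
    (hΛ : gradient F Xstar = -(WithLp.toLp 2 (hbW.sqrt.mulVec (WithLp.ofLp Λstar)))) :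
    let Fstar : EuclideanSpace ℝ (Fin n × Fin d) → ℝ :=
      fun y => ⨆ x, ((inner ℝ y x : ℝ) - F x)
    let D : EuclideanSpace ℝ (Fin n × Fin d) → ℝ :=
      fun Λ => -Fstar (-(WithLp.toLp 2 (hbW.sqrt.mulVec (WithLp.ofLp Λ))))
    IsMaxOn D Set.univ Λstar ∧
      ∀ Λ : EuclideanSpace ℝ (Fin n × Fin d),
        Λ ∈ (Set.range (WithLp.toLp 2 ∘ hbW.sqrt.mulVec) : Set (EuclideanSpace ℝ (Fin n × Fin d))) →
          IsMaxOn D Set.univ Λ → Λ = Λstar := by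
  intro Fstar D
  obtain rfl | hn := n.eq_zero_or_pos
  · exact ⟨fun Λ _ => le_of_eq (congrArg D (Subsingleton.elim _ _)),
      fun _ _ _ => Subsingleton.elim _ _⟩
  have hFsc : StrongConvexOn univ (1 / n * μ) F := hF ▸
    (EuclideanSpace.strongConvexOn_sum_comp_blockLinearMap hfsc).const_mul (by positivity)
  have hFdiff : Differentiable ℝ F := hF ▸ .const_mul (.fun_sum fun i _ =>
    (hfdiff i).comp (EuclideanSpace.blockLinearMap i).toContinuousLinearMap.differentiable) _
  have hW1 : W *ᵥ 1 = 0 := LinearMap.mem_ker.mp (hker ▸ Submodule.mem_span_singleton_self _)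
  have hTX : hbW.sqrt.toEuclideanLin Xstar = 0 := by
    change WithLp.toLp 2 (hbW.sqrt *ᵥ WithLp.ofLp Xstar) = 0
    rw [hbW.sqrt_mulVec_eq_zero_iff.mpr, WithLp.toLp_zero]
    rw [hXstar, kronecker_one_mulVec, hW1]
    exact funext fun _ => zero_mul _
  have hgrad : HasGradientAt F (-hbW.sqrt.toEuclideanLin Λstar) Xstar :=
    hΛ ▸ (hFdiff Xstar).hasGradientAt
  rw [range_toLp_comp_mulVec] at hΛmem ⊢
  exact (hFsc.isMaxOn_dual_and_unique (by positivity)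
    (isSymmetric_toEuclideanLin_iff.mpr hbW.isHermitian_sqrt) hTX hΛmem hgrad :)

/-- The point `Λ* ∈ Im(√𝐖)` with `∇F(X*) = -√𝐖 Λ*` (where `X* = 1_n ⊗ x*` and
`x*` minimizes `Σᵢ fᵢ`) maximizes the dual function `Λ ↦ -F*(-√𝐖 Λ)`, and it is
the unique maximizer lying in `Im(√𝐖)`. -/
theorem dual_optimum_unique_in_image
    (n d : ℕ) (μ L : ℝ) (hμ : 0 < μ) (hμL : μ ≤ L)
    (W : Matrix (Fin n) (Fin n) ℝ) (hW : W.PosSemidef)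
    (hker : LinearMap.ker W.mulVecLin =
      Submodule.span ℝ {(fun _ => (1 : ℝ) : Fin n → ℝ)})
    (hbW : (W ⊗ₖ (1 : Matrix (Fin d) (Fin d) ℝ)).PosSemidef)
    (f : Fin n → EuclideanSpace ℝ (Fin d) → ℝ)
    (hfdiff : ∀ i, Differentiable ℝ (f i))
    (hfsc : ∀ i, StrongConvexOn Set.univ μ (f i))
    (hfsm : ∀ i, LipschitzWith (Real.toNNReal L) (gradient (f i)))
    (xstar : EuclideanSpace ℝ (Fin d))
    (hxstar : IsMinOn (fun x => ∑ i, f i x) Set.univ xstar)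
    (F : EuclideanSpace ℝ (Fin n × Fin d) → ℝ)
    (hF : F = fun X => (1 / (n : ℝ)) * ∑ i, f i (WithLp.toLp 2 (fun k => X (i, k))))
    (Xstar : EuclideanSpace ℝ (Fin n × Fin d))
    (hXstar : Xstar = WithLp.toLp 2 (fun p => xstar p.2))
    (Λstar : EuclideanSpace ℝ (Fin n × Fin d))
    (hΛmem : Λstar ∈ (Set.range (WithLp.toLp 2 ∘ hbW.sqrt.mulVec) :
      Set (EuclideanSpace ℝ (Fin n × Fin d))))
    (hΛ : gradient F Xstar = -(WithLp.toLp 2 (hbW.sqrt.mulVec (WithLp.ofLp Λstar)))) :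
    let Fstar : EuclideanSpace ℝ (Fin n × Fin d) → ℝ :=
      fun y => ⨆ x, ((inner ℝ y x : ℝ) - F x)
    let D : EuclideanSpace ℝ (Fin n × Fin d) → ℝ :=
      fun Λ => -Fstar (-(WithLp.toLp 2 (hbW.sqrt.mulVec (WithLp.ofLp Λ))))
    IsMaxOn D Set.univ Λstar ∧
      ∀ Λ : EuclideanSpace ℝ (Fin n × Fin d),
        Λ ∈ (Set.range (WithLp.toLp 2 ∘ hbW.sqrt.mulVec) : Set (EuclideanSpace ℝ (Fin n × Fin d))) →
          IsMaxOn D Set.univ Λ → Λ = Λstar :=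
  dual_optimum_unique_in_image_general n d μ hμ W hker hbW f hfdiff hfsc xstar F hF Xstar hXstar
    Λstar hΛmem hΛ
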